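/- Every locally graded non-sofic group is ω-non-sofic; that is, it admits a strictly descending chain H_0 > H_1 > H_2 > ⋯ of non-sofic subgroups indexed by the natural numbers. -/

import Mathlib

/-- The normalized Hamming distance between two permutations of `Fin n`:
the number of points where they differ, divided by `n`. -/
noncomputable def permHammingDist {n : ℕ} (σ τ : Equiv.Perm (Fin n)) : ℝ :=
  ((Finset.univ.filter fun i => σ i ≠ τ i).card : ℝ) / n

/-- A group `G` is sofic if for every finite subset `F ⊆ G` and every `ε > 0` there exist
`n ≥ 1` and a map `θ` from `F` to `Sym(Fin n)` (extended to all of `G`) such that: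
(i) `θ` is an `ε`-approximate homomorphism on `F`;
(ii) `θ` almost sends the identity to the identity;
(iii) distinct elements of `F` are sent to permutations at Hamming distance at least `1/4`. -/
def IsSofic (G : Type*) [Group G] : Prop :=
  ∀ (F : Finset G) (ε : ℝ), 0 < ε →
    ∃ n : ℕ, 1 ≤ n ∧ ∃ θ : G → Equiv.Perm (Fin n),
      (∀ g h : G, g ∈ F → h ∈ F → g * h ∈ F →
        permHammingDist (θ g * θ h) (θ (g * h)) < ε) ∧
      ((1 : G) ∈ F → permHammingDist (θ 1) 1 < ε) ∧
      (∀ x y : G, x ∈ F → y ∈ F → x ≠ y → 1 / 4 ≤ permHammingDist (θ x) (θ y))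

/-- A group is minimal non-sofic if it is not sofic but every proper subgroup is sofic. -/
def IsMinimalNonSofic (G : Type*) [Group G] : Prop :=
  ¬ IsSofic G ∧ ∀ H : Subgroup G, H ≠ ⊤ → IsSofic H

/-- A group is locally graded if every nontrivial finitely generated subgroup has a
proper subgroup of finite index. -/
def IsLocallyGraded (G : Type*) [Group G] : Prop :=
  ∀ H : Subgroup G, H ≠ ⊥ → H.FG → ∃ K : Subgroup H, K ≠ ⊤ ∧ K.FiniteIndex


/-!
Soficity is a local property, so a non-sofic group has a finitely generated non-sofic subgroup.
Such a subgroup `H` is nontrivial, since trivial groups are sofic, so by local grading it has a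
proper subgroup `K` of finite index, again finitely generated by Schreier's lemma. `K` is still
non-sofic: sofic approximations of `K` on `n` points induce sofic approximations of `H` on
`(H ⧸ K) × n` points, `g` acting by `(c, i) ↦ (g • c, θ (κ g c) i)` where `κ` is the cocycle
attached to a choice of coset representatives. Iterating produces the descending chain.
-/

open Equiv Finset Function

section Hamming

variable {ι ι' κ β : Type*} [Fintype ι] [Fintype ι'] [Fintype κ] [DecidableEq β]

theorem hammingDist_comp_equiv (e : ι' ≃ ι) (x y : ι → β) :
    hammingDist (x ∘ e) (y ∘ e) = hammingDist x y := by
  simp only [hammingDist, card_filter]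
  exact e.sum_comp fun i => if x i ≠ y i then 1 else 0

theorem hammingDist_prod_eq_sum (x y : κ × ι → β) :
    hammingDist x y = ∑ k, hammingDist (fun i => x (k, i)) (fun i => y (k, i)) := by
  simp only [hammingDist, card_filter, Fintype.sum_prod_type]

end Hamming

section SoficApprox

variable {G H α β : Type*} [Group G] [Group H] [Fintype α] [DecidableEq α] [Fintype β]
  [DecidableEq β]

def IsSoficApprox (F : Finset G) (ε : ℝ) (θ : G → Perm α) : Prop :=
  (∀ g h, g ∈ F → h ∈ F → g * h ∈ F →
    (hammingDist ⇑(θ g * θ h) ⇑(θ (g * h)) : ℝ) < ε * Fintype.card α) ∧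
  ((1 : G) ∈ F → (hammingDist ⇑(θ 1) ⇑(1 : Perm α) : ℝ) < ε * Fintype.card α) ∧
  (∀ x y, x ∈ F → y ∈ F → x ≠ y → (Fintype.card α : ℝ) / 4 ≤ hammingDist ⇑(θ x) ⇑(θ y))

theorem isSofic_iff_forall_exists_isSoficApprox :
    IsSofic G ↔ ∀ (F : Finset G) (ε : ℝ), 0 < ε →
      ∃ n, 1 ≤ n ∧ ∃ θ : G → Perm (Fin n), IsSoficApprox F ε θ := by
  refine forall₃_congr fun F ε _ => exists_congr fun n => and_congr_right fun hn =>
    exists_congr fun θ => ?_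
  have hn : (0 : ℝ) < n := by exact_mod_cast hn
  simp only [IsSoficApprox, permHammingDist, hammingDist, Fintype.card_fin, div_lt_iff₀ hn,
    le_div_iff₀ hn, one_div_mul_eq_div]

variable {F : Finset G} {ε : ℝ}

theorem IsSoficApprox.permCongr {θ : G → Perm α} (e : α ≃ β) (hθ : IsSoficApprox F ε θ) :
    IsSoficApprox F ε fun g => e.permCongrHom (θ g) := by
  have hdist (σ τ : Perm α) :
      hammingDist ⇑(e.permCongrHom σ) ⇑(e.permCongrHom τ) = hammingDist ⇑σ ⇑τ := by
    rw [← hammingDist_comp (fun _ => e) fun _ => e.injective, ← hammingDist_comp_equiv e.symm]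
    rfl
  obtain ⟨hmul, hone, hsep⟩ := hθ
  simp only [IsSoficApprox, ← map_mul, ← map_one e.permCongrHom, hdist, Fintype.card_congr e.symm]
  exact ⟨hmul, hone, hsep⟩

theorem IsSofic.of_subsingleton [Subsingleton G] : IsSofic G := by
  refine isSofic_iff_forall_exists_isSoficApprox.2 fun F ε hε => ⟨1, le_rfl, 1, ?_, ?_, ?_⟩
  · exact fun _ _ _ _ _ => by simpa using hε
  · exact fun _ => by simpa using hε
  · exact fun x y _ _ hxy => (hxy (Subsingleton.elim x y)).elim

theorem IsSoficApprox.comp {θ : H → Perm α} {f : G →* H} (hf : Injective f)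
    (hθ : IsSoficApprox (F.map ⟨f, hf⟩) ε θ) : IsSoficApprox F ε (θ ∘ f) := by
  obtain ⟨hmul, hone, hsep⟩ := hθ
  have hmem {g : G} (hg : g ∈ F) : f g ∈ F.map ⟨f, hf⟩ := mem_map_of_mem _ hg
  refine ⟨fun g h hg hh hgh => ?_, fun h1 => ?_, fun x y hx hy hxy => ?_⟩
  · simpa only [comp_apply, map_mul] using
      hmul _ _ (hmem hg) (hmem hh) (map_mul f g h ▸ hmem hgh)
  · simpa only [comp_apply, map_one] using hone (map_one f ▸ hmem h1)
  · exact hsep _ _ (hmem hx) (hmem hy) (hf.ne hxy)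

theorem IsSofic.of_injective {f : G →* H} (hf : Injective f) (hH : IsSofic H) : IsSofic G := by
  rw [isSofic_iff_forall_exists_isSoficApprox] at hH ⊢
  intro F ε hε
  obtain ⟨n, hn, θ, hθ⟩ := hH (F.map ⟨f, hf⟩) ε hε
  exact ⟨n, hn, θ ∘ f, hθ.comp hf⟩

theorem IsSoficApprox.extend {θ : H → Perm α} {F : Finset H} {f : H →* G} (hf : Injective f)
    (hθ : IsSoficApprox F ε θ) : IsSoficApprox (F.map ⟨f, hf⟩) ε (extend f θ 1) := by
  obtain ⟨hmul, hone, hsep⟩ := hθ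
  have hmem {g : H} : f g ∈ F.map ⟨f, hf⟩ ↔ g ∈ F := mem_map' ⟨f, hf⟩
  refine ⟨?_, fun h1 => ?_, ?_⟩
  · intro _ _ hg' hh' hgh
    obtain ⟨g, hg, rfl⟩ := mem_map.1 hg'
    obtain ⟨h, hh, rfl⟩ := mem_map.1 hh'
    rw [Embedding.coeFn_mk, ← map_mul, hmem] at hgh
    simpa only [Embedding.coeFn_mk, ← map_mul, hf.extend_apply] using hmul g h hg hh hgh
  · rw [← map_one f, hmem] at h1
    simpa only [← map_one f, hf.extend_apply] using hone h1
  · intro _ _ hx' hy' hxy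
    obtain ⟨x, hx, rfl⟩ := mem_map.1 hx'
    obtain ⟨y, hy, rfl⟩ := mem_map.1 hy'
    simpa only [Embedding.coeFn_mk, hf.extend_apply] using hsep x y hx hy (ne_of_apply_ne f hxy)

theorem IsSofic.of_forall_fg (h : ∀ K : Subgroup G, K.FG → IsSofic K) : IsSofic G := by
  classical
  refine isSofic_iff_forall_exists_isSoficApprox.2 fun F ε hε => ?_
  set K := Subgroup.closure (F : Set G)
  obtain ⟨n, hn, θ, hθ⟩ := isSofic_iff_forall_exists_isSoficApprox.1 (h K ⟨F, rfl⟩)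
    (F.subtype (· ∈ K)) ε hε
  refine ⟨n, hn, extend K.subtype θ 1, ?_⟩
  convert hθ.extend K.subtype_injective
  exact (subtype_map_of_mem fun g hg => Subgroup.subset_closure hg).symm

end SoficApprox

theorem Equiv.prodShear_mul_prodShear {γ δ : Type*} (σ σ' : Perm γ) (τ τ' : γ → Perm δ) :
    prodShear σ τ * prodShear σ' τ' = prodShear (σ * σ') fun c => τ (σ' c) * τ' c :=
  Equiv.ext fun _ => rfl

theorem hammingDist_prodShear {γ δ : Type*} [Fintype γ] [Fintype δ] [DecidableEq γ]
    [DecidableEq δ] (σ σ' : Perm γ) (τ τ' : γ → Perm δ) :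
    hammingDist ⇑(prodShear σ τ) ⇑(prodShear σ' τ') =
      ∑ c, if σ c = σ' c then hammingDist ⇑(τ c) ⇑(τ' c) else Fintype.card δ := by
  rw [hammingDist_prod_eq_sum]
  refine sum_congr rfl fun c _ => ?_
  split_ifs with hc
  · simp only [prodShear_apply, hc]
    exact hammingDist_comp (fun _ => Prod.mk (σ' c)) fun _ => Prod.mk_right_injective _
  · simp [hammingDist, hc]

namespace Subgroup

variable {H : Type*} [Group H] (K : Subgroup H)

noncomputable def cosetCocycle (g : H) (c : H ⧸ K) : K :=
  ⟨(g • c).out⁻¹ * g * c.out, by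
    rw [mul_assoc, ← QuotientGroup.eq, QuotientGroup.out_eq']
    exact congrArg (g • ·) (QuotientGroup.out_eq' c).symm⟩

theorem cosetCocycle_mul (g h : H) (c : H ⧸ K) :
    K.cosetCocycle (g * h) c = K.cosetCocycle g (h • c) * K.cosetCocycle h c := by
  ext
  simp only [cosetCocycle, mul_smul, coe_mul]
  group

theorem cosetCocycle_one (c : H ⧸ K) : K.cosetCocycle 1 c = 1 := by
  ext
  simp [cosetCocycle]

theorem eq_of_smul_eq_of_cosetCocycle_eq {g h : H} {c : H ⧸ K} (hs : g • c = h • c)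
    (hκ : K.cosetCocycle g c = K.cosetCocycle h c) : g = h := by
  simpa [cosetCocycle, hs] using congrArg Subtype.val hκ

noncomputable def inducedPerm {α : Type*} (θ : K → Perm α) (g : H) : Perm ((H ⧸ K) × α) :=
  prodShear (MulAction.toPerm g) fun c => θ (K.cosetCocycle g c)

end Subgroup

section Induced

variable {H α : Type*} [Group H] [Fintype α] [DecidableEq α] {K : Subgroup H}

theorem IsSoficApprox.inducedPerm [Fintype (H ⧸ K)] [DecidableEq (H ⧸ K)] {θ : K → Perm α}
    {F : Finset H} {F' : Finset K} {ε : ℝ} (hF : ∀ g ∈ F, ∀ c, K.cosetCocycle g c ∈ F')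
    (hθ : IsSoficApprox F' ε θ) : IsSoficApprox F ε (K.inducedPerm θ) := by
  obtain ⟨hmul, hone, hsep⟩ := hθ
  have hcard : (Fintype.card ((H ⧸ K) × α) : ℝ) = Fintype.card (H ⧸ K) * Fintype.card α := by
    rw [Fintype.card_prod, Nat.cast_mul]
  have hsum {f : H ⧸ K → ℕ} (hf : ∀ c, (f c : ℝ) < ε * Fintype.card α) :
      ((∑ c, f c : ℕ) : ℝ) < ε * Fintype.card ((H ⧸ K) × α) := by
    push_cast
    calc ∑ c, (f c : ℝ) < ∑ _c : H ⧸ K, ε * Fintype.card α :=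
          sum_lt_sum_of_nonempty univ_nonempty fun c _ => hf c
      _ = _ := by rw [sum_const, card_univ, nsmul_eq_mul, hcard]; ring
  refine ⟨fun g h hg hh hgh => ?_, fun h1 => ?_, fun x y hx hy hxy => ?_⟩
  · simp only [Subgroup.inducedPerm, prodShear_mul_prodShear, hammingDist_prodShear,
      Perm.mul_apply, MulAction.toPerm_apply, mul_smul, if_true]
    exact hsum fun c => by
      simpa only [K.cosetCocycle_mul] using hmul _ _ (hF g hg _) (hF h hh c)
        (K.cosetCocycle_mul g h c ▸ hF _ hgh c)
  · have h1' : (1 : K) ∈ F' := by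
      simpa only [K.cosetCocycle_one] using hF 1 h1 (1 : H)
    rw [show (1 : Perm ((H ⧸ K) × α)) = prodShear 1 fun _ => 1 from Equiv.ext fun _ => rfl]
    simp only [Subgroup.inducedPerm, hammingDist_prodShear, MulAction.toPerm_apply, one_smul,
      Perm.one_apply, if_true, K.cosetCocycle_one]
    exact hsum fun _ => hone h1'
  · simp only [Subgroup.inducedPerm, hammingDist_prodShear, MulAction.toPerm_apply]
    push_cast
    calc (Fintype.card ((H ⧸ K) × α) : ℝ) / 4 = #univ • (Fintype.card α / 4 : ℝ) := by
          rw [card_univ, nsmul_eq_mul, hcard]; ring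
      _ ≤ _ := card_nsmul_le_sum _ _ _ fun c _ => ?_
    split_ifs with hc
    · exact hsep _ _ (hF x hx c) (hF y hy c)
        fun hκ => hxy (K.eq_of_smul_eq_of_cosetCocycle_eq hc hκ)
    · linarith [(Nat.cast_nonneg (Fintype.card α) : (0 : ℝ) ≤ _)]

theorem IsSofic.of_finiteIndex [K.FiniteIndex] (hK : IsSofic K) : IsSofic H := by
  classical
  let _ := K.fintypeQuotientOfFiniteIndex
  rw [isSofic_iff_forall_exists_isSoficApprox] at hK ⊢
  intro F ε hε
  obtain ⟨n, hn, θ, hθ⟩ := hK ((F ×ˢ univ).image (uncurry K.cosetCocycle)) ε hε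
  have hF : ∀ g ∈ F, ∀ c, K.cosetCocycle g c ∈ (F ×ˢ univ).image (uncurry K.cosetCocycle) :=
    fun g hg c => mem_image.2 ⟨(g, c), mem_product.2 ⟨hg, mem_univ c⟩, rfl⟩
  have : Nonempty (Fin n) := ⟨⟨0, hn⟩⟩
  exact ⟨_, Fintype.card_pos, _,
    (hθ.inducedPerm hF).permCongr (Fintype.equivFin ((H ⧸ K) × Fin n))⟩

end Induced

theorem IsLocallyGraded.exists_lt_fg_not_isSofic {G : Type*} [Group G] (hG : IsLocallyGraded G)
    {H : Subgroup G} (hfg : H.FG) (hH : ¬ IsSofic H) : ∃ H' < H, H'.FG ∧ ¬ IsSofic H' := by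
  have hbot : H ≠ ⊥ := by
    rintro rfl
    exact hH IsSofic.of_subsingleton
  obtain ⟨K, hKtop, hK⟩ := hG H hbot hfg
  have := (Group.fg_iff_subgroup_fg H).2 hfg
  let e := K.equivMapOfInjective H.subtype H.subtype_injective
  refine ⟨K.map H.subtype, ?_, ?_, fun hs => hH (IsSofic.of_finiteIndex (K := K) ?_)⟩
  · calc K.map H.subtype < (⊤ : Subgroup H).map H.subtype :=
          Subgroup.map_subtype_lt_map_subtype.2 hKtop.lt_top
      _ = H := by rw [← MonoidHom.range_eq_map, Subgroup.range_subtype]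
  · exact (Group.fg_iff_subgroup_fg _).1 (Group.fg_of_surjective (f := e.toMonoidHom) e.surjective)
  · exact hs.of_injective (f := e.toMonoidHom) e.injective

/-- Every locally graded non-sofic group is ω-non-sofic: it admits a strictly
descending chain of non-sofic subgroups indexed by ℕ. -/
theorem locallyGraded_nonSofic_omega (G : Type*) [Group G]
    (hlg : IsLocallyGraded G) (hG : ¬ IsSofic G) :
    ∃ H : ℕ → Subgroup G, StrictAnti H ∧ ∀ i, ¬ IsSofic (H i) := by
  obtain ⟨H₀, hH₀⟩ : ∃ H : Subgroup G, H.FG ∧ ¬ IsSofic H := by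
    by_contra! h
    exact hG (IsSofic.of_forall_fg h)
  have : NoMinOrder {H : Subgroup G // H.FG ∧ ¬ IsSofic H} :=
    ⟨fun ⟨_, hfg, hH⟩ =>
      let ⟨H', hlt, hH'⟩ := hlg.exists_lt_fg_not_isSofic hfg hH
      ⟨⟨H', hH'⟩, hlt⟩⟩
  obtain ⟨f, hf, -⟩ := Nat.exists_strictAnti' (⟨H₀, hH₀⟩ : {H : Subgroup G // H.FG ∧ ¬ IsSofic H})
  exact ⟨fun n => (f n).1, hf, fun n => (f n).2.2⟩
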